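/- arXiv:2604.25613 — 3 statements merged into one kernel-verified Lean document; each statement's English description precedes it below -/
import Mathlib

section
/- Let f be a function whose restriction along each coordinate j is of the form φ ↦ A_j sin(φ + B_j) + C_j. Then the partial derivative along coordinate j satisfies the parameter-shift rule: ∂_j f(θ) = (f(θ + (π/2)e_j) − f(θ − (π/2)e_j))/2. -/
open Real

theorem deriv_eq_parameter_shift_of_sinusoid {g : ℝ → ℝ} {A B C : ℝ}
    (hg : ∀ t, g t = A * sin (t + B) + C) (x : ℝ) :
    deriv g x = (g (x + π / 2) - g (x - π / 2)) / 2 := by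
  have hg' : g = fun t => A * sin (t + B) + C := funext hg
  have hderiv : HasDerivAt g (A * cos (x + B)) x := by
    rw [hg']
    simpa using (((hasDerivAt_id x).add_const B).sin.const_mul A).add_const C
  rw [hderiv.deriv, hg, hg, add_right_comm, sub_add_eq_add_sub, sin_add_pi_div_two,
    sin_sub_pi_div_two]
  ring

theorem stmt_4 {d : ℕ} (f : (Fin d → ℝ) → ℝ) (θ : Fin d → ℝ) (j : Fin d)
    (A B C : ℝ)
    (hf : ∀ t : ℝ, f (θ + Pi.single j t) = A * Real.sin ((θ j + t) + B) + C) :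
    deriv (fun t : ℝ => f (θ + Pi.single j t)) 0
      = (f (θ + Pi.single j (π/2)) - f (θ - Pi.single j (π/2))) / 2 := by
  have hsinusoid : ∀ t, f (θ + Pi.single j t) = A * sin (t + (θ j + B)) + C := by
    intro t
    rw [hf, add_comm (θ j) t, add_assoc]
  rw [deriv_eq_parameter_shift_of_sinusoid hsinusoid, zero_add, zero_sub, Pi.single_neg,
    ← sub_eq_add_neg]
end

section
/- Let f be a function whose restriction along coordinate j is φ ↦ A_j sin(φ + B_j) + C_j. Define h_j(θ) = (f(θ + (π/2)e_j) + f(θ − (π/2)e_j) − 2f(θ))/2. Then A_j = √(h_j(θ)² + (∂_j f(θ))²) and C_j = h_j(θ) + f(θ), where ∂_j f(θ) = (f(θ+(π/2)e_j) − f(θ−(π/2)e_j))/2. -/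
/-!
Along coordinate `j` the function is `g t = A sin (t + B') + C`. Since the shifts by `±π/2` turn
`sin` into `±cos`, the central difference of `g` at step `π/2` is `A cos`, the second difference is
`-A sin`, and `A`, `C` are read off from `sin² + cos² = 1` and from `g = A sin + C`.
-/

open Real

section Sinusoid

variable {g : ℝ → ℝ} {A B C : ℝ}

lemma sinusoid_add_pi_div_two (hg : ∀ t, g t = A * sin (t + B) + C) (x : ℝ) :
    g (x + π / 2) = A * cos (x + B) + C := by
  rw [hg, add_right_comm, sin_add_pi_div_two]

lemma sinusoid_sub_pi_div_two (hg : ∀ t, g t = A * sin (t + B) + C) (x : ℝ) :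
    g (x - π / 2) = -(A * cos (x + B)) + C := by
  rw [hg, sub_add_eq_add_sub, sin_sub_pi_div_two, mul_neg]

lemma sinusoid_central_diff (hg : ∀ t, g t = A * sin (t + B) + C) (x : ℝ) :
    (g (x + π / 2) - g (x - π / 2)) / 2 = A * cos (x + B) := by
  rw [sinusoid_add_pi_div_two hg, sinusoid_sub_pi_div_two hg]
  ring

lemma sinusoid_second_diff (hg : ∀ t, g t = A * sin (t + B) + C) (x : ℝ) :
    (g (x + π / 2) + g (x - π / 2) - 2 * g x) / 2 = -(A * sin (x + B)) := by
  rw [sinusoid_add_pi_div_two hg, sinusoid_sub_pi_div_two hg, hg x]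
  ring

lemma sinusoid_amplitude_eq (hA : 0 ≤ A) (hg : ∀ t, g t = A * sin (t + B) + C) (x : ℝ) :
    A = √(((g (x + π / 2) + g (x - π / 2) - 2 * g x) / 2) ^ 2
      + ((g (x + π / 2) - g (x - π / 2)) / 2) ^ 2) := by
  rw [sinusoid_second_diff hg, sinusoid_central_diff hg, neg_sq, mul_pow, mul_pow, ← mul_add,
    sin_sq_add_cos_sq, mul_one, sqrt_sq hA]

lemma sinusoid_offset_eq (hg : ∀ t, g t = A * sin (t + B) + C) (x : ℝ) :
    C = (g (x + π / 2) + g (x - π / 2) - 2 * g x) / 2 + g x := by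
  rw [sinusoid_second_diff hg, hg x]
  ring

end Sinusoid

theorem stmt_5 {d : ℕ} (f : (Fin d → ℝ) → ℝ) (θ : Fin d → ℝ) (j : Fin d)
    (A B C : ℝ) (hA : 0 ≤ A)
    (hf : ∀ t : ℝ, f (θ + Pi.single j t) = A * Real.sin ((θ j + t) + B) + C) :
    let dj := (f (θ + Pi.single j (π/2)) - f (θ - Pi.single j (π/2))) / 2
    let hj := (f (θ + Pi.single j (π/2)) + f (θ - Pi.single j (π/2)) - 2 * f θ) / 2
    A = Real.sqrt (hj ^ 2 + dj ^ 2) ∧ C = hj + f θ := by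
  set g : ℝ → ℝ := fun t ↦ f (θ + Pi.single j t)
  have hg : ∀ t, g t = A * sin (t + (θ j + B)) + C := fun t ↦ by
    rw [show g t = _ from hf t, add_comm (θ j) t, add_assoc]
  have hg_zero : g 0 = f θ := by simp [g]
  have hg_neg : g (0 - π / 2) = f (θ - Pi.single j (π / 2)) := by
    simp only [g, zero_sub, Pi.single_neg, ← sub_eq_add_neg]
  have hg_pos : g (0 + π / 2) = f (θ + Pi.single j (π / 2)) := by simp only [g, zero_add]
  have hamp := sinusoid_amplitude_eq hA hg 0
  have hoff := sinusoid_offset_eq hg 0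
  rw [hg_zero, hg_neg, hg_pos] at hamp hoff
  exact ⟨hamp, hoff⟩
end

section
/- Under the hypotheses of the previous recurrence with u = (1+√2)λ_max·d (after accounting for uniform random coordinate selection over d coordinates), if σ² ≤ ε²/(2d) and T ≥ 2(1+√2)dλ_max(F_0 − F*)/ε², then min_{0 ≤ t < T} E[‖∇f(θ^{(t)})‖²] ≤ ε². -/
/-!
Telescoping the recurrence bounds the average over `t < T` of `(G t - σ² d) / u`, with
`u = (1 + √2) λ_max d`, by `(F 0 - F*) / T`, which the choice of `T` makes at most `ε² / (2u)`;
the minimum is at most the average, and `σ² d ≤ ε² / 2` absorbs the noise term.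
-/

open Finset

theorem sum_range_le_sub_of_descent {F g : ℕ → ℝ} {T : ℕ}
    (h : ∀ t < T, F (t + 1) - F t ≤ -g t) :
    ∑ t ∈ range T, g t ≤ F 0 - F T := by
  rw [← neg_sub, ← sum_range_sub, ← sum_neg_distrib]
  exact sum_le_sum fun t ht => le_neg_of_le_neg (h t (mem_range.mp ht))

theorem exists_lt_le_div_of_sum_range_le {g : ℕ → ℝ} {T : ℕ} {B : ℝ} (hT : 0 < T)
    (h : ∑ t ∈ range T, g t ≤ B) : ∃ t < T, g t ≤ B / T := by
  have hsum : ∑ t ∈ range T, g t ≤ ∑ _t ∈ range T, B / T := by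
    rw [sum_const, card_range, nsmul_eq_mul, mul_div_cancel₀ _ (by positivity)]
    exact h
  obtain ⟨t, ht, hle⟩ := exists_le_of_sum_le (nonempty_range_iff.mpr hT.ne') hsum
  exact ⟨t, mem_range.mp ht, hle⟩

theorem exists_lt_le_div_of_descent {F g : ℕ → ℝ} {T : ℕ} {Fstar : ℝ} (hT : 0 < T)
    (h : ∀ t < T, F (t + 1) - F t ≤ -g t) (hlb : Fstar ≤ F T) :
    ∃ t < T, g t ≤ (F 0 - Fstar) / T :=
  exists_lt_le_div_of_sum_range_le hT <| (sum_range_le_sub_of_descent h).trans (by linarith)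

theorem stmt_12_general (d : ℕ) (hd : 0 < d) (F G : ℕ → ℝ) (Fstar σ lammax ε : ℝ)
    (T : ℕ) (hT : 1 ≤ T)
    (hlam : 0 < lammax) (hε : 0 < ε)
    (hlb : ∀ t, Fstar ≤ F t)
    (hrec : ∀ t < T,
      F (t + 1) - F t ≤ -(G t - σ ^ 2 * d) / ((1 + Real.sqrt 2) * lammax * d))
    (hσ : σ ^ 2 ≤ ε ^ 2 / (2 * d))
    (hTbound : 2 * (1 + Real.sqrt 2) * d * lammax * (F 0 - Fstar) / ε ^ 2 ≤ T) :
    ∃ t < T, G t ≤ ε ^ 2 := by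
  set u := (1 + Real.sqrt 2) * lammax * d
  have hu_pos : 0 < u := by positivity
  have hT_pos : (0 : ℝ) < T := by exact_mod_cast hT
  obtain ⟨t, ht, hgt⟩ := exists_lt_le_div_of_descent (g := fun t => (G t - σ ^ 2 * d) / u) hT
    (fun t ht => by simpa only [neg_div] using hrec t ht) (hlb T)
  have hnoise : σ ^ 2 * d ≤ ε ^ 2 / 2 := by
    have hd_pos : (0 : ℝ) < d := by exact_mod_cast hd
    calc σ ^ 2 * d ≤ ε ^ 2 / (2 * d) * d := by gcongr
      _ = ε ^ 2 / 2 := by field_simp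
  have hgap : u * ((F 0 - Fstar) / T) ≤ ε ^ 2 / 2 := by
    rw [div_le_iff₀ (by positivity)] at hTbound
    rw [mul_div_assoc', div_le_iff₀ hT_pos]
    linarith [show 2 * (1 + Real.sqrt 2) * d * lammax = 2 * u by ring]
  exact ⟨t, ht, by linarith [(div_le_iff₀' hu_pos).mp hgt]⟩

theorem stmt_12 (d : ℕ) (hd : 0 < d) (F G : ℕ → ℝ) (Fstar σ lammax ε : ℝ)
    (T : ℕ) (hT : 1 ≤ T)
    (hlam : 0 < lammax) (hε : 0 < ε)
    (hlb : ∀ t, Fstar ≤ F t) (hG : ∀ t, 0 ≤ G t)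
    (hrec : ∀ t < T,
      F (t + 1) - F t ≤ -(G t - σ ^ 2 * d) / ((1 + Real.sqrt 2) * lammax * d))
    (hσ : σ ^ 2 ≤ ε ^ 2 / (2 * d))
    (hTbound : 2 * (1 + Real.sqrt 2) * d * lammax * (F 0 - Fstar) / ε ^ 2 ≤ T) :
    ∃ t < T, G t ≤ ε ^ 2 :=
  stmt_12_general d hd F G Fstar σ lammax ε T hT hlam hε hlb hrec hσ hTbound
end
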